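/- For the pre Lie superalgebra of polynomial multivector fields on R^n with double weight (w,h) = (degree shift, polynomial-degree shift), the Euler characteristic of the double-weighted chain complex {C_m^{(0,h)}} (first weight w = 0) is 0 for every integer h. Concretely: with d_t = dim X^1_{t-1}(R^n) = n·C(n-1+t-1, n-1), Σ_{m≥0} (-1)^m Σ_{(ℓ_t): Σℓ_t = m, Σ t·ℓ_t = 2m+h} Π_t C(d_t, ℓ_t) = 0, where for h = 0 the m = 0 term contributes 1 (empty product) and for h ≠ 0 the sum is over m ≥ max(1,-h). -/

import Mathlib

/-!
The weight condition `Σ_t t ℓ_t = 2 Σ_t ℓ_t + h` reads `Σ_t (t - 2) ℓ_t = h`, so it does not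
see `ℓ_2`: linear vector fields have weight zero. Splitting `ℓ = (ℓ.erase 2, ℓ_2)` therefore
factors the Euler characteristic as `(Σ_q …) · Σ_k (-1)^k C(d_2, k)`, and the second factor is
`(1 - 1)^{d_2} = 0` because `d_2 = n² ≠ 0`.
-/

open Finset Function

theorem finsum_mul_finsum {α β R : Type*} [NonUnitalNonAssocSemiring R] [NoZeroDivisors R]
    (f : α → R) (g : β → R) :
    (∑ᶠ a, f a) * ∑ᶠ b, g b = ∑ᶠ p : α × β, f p.1 * g p.2 := by
  have hsupp : support (fun p : α × β => f p.1 * g p.2) = support f ×ˢ support g := by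
    ext p
    simp
  by_cases hfin : (support f ×ˢ support g).Finite
  · rw [finsum_curry _ (by rwa [HasFiniteSupport, hsupp]), finsum_mul]
    simp only [mul_finsum]
  · rw [finsum_of_infinite_support (f := fun p : α × β => f p.1 * g p.2) (by rwa [hsupp])]
    rcases Set.infinite_prod.1 hfin with ⟨hf, -⟩ | ⟨hg, -⟩
    · rw [finsum_of_infinite_support hf, zero_mul]
    · rw [finsum_of_infinite_support hg, mul_zero]

theorem Int.finsum_alternating_choose_of_ne {m : ℕ} (hm : m ≠ 0) :
    ∑ᶠ k : ℕ, ((-1) ^ k * m.choose k : ℤ) = 0 := by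
  rw [finsum_eq_sum_of_support_subset _ (s := Finset.range (m + 1)),
    Int.alternating_sum_range_choose_of_ne hm]
  intro k hk
  rw [coe_range, Set.mem_Iio]
  by_contra! hmk
  exact hk (by simp [Nat.choose_eq_zero_of_lt (show m < k by omega)])

namespace Finsupp

variable {α : Type*}

noncomputable def subtypeEquivEraseProd {P : (α →₀ ℕ) → Prop} (i : α)
    (hP : ∀ ℓ, P ℓ ↔ P (ℓ.erase i)) :
    {ℓ // P ℓ} ≃ {q // P q ∧ q i = 0} × ℕ where
  toFun ℓ := (⟨ℓ.1.erase i, (hP _).1 ℓ.2, erase_same⟩, ℓ.1 i)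
  invFun p := ⟨p.1.1.update i p.2, by rw [hP, erase_update_eq_erase, ← hP]; exact p.1.2.1⟩
  left_inv ℓ := by ext1; simp
  right_inv p := by
    obtain ⟨⟨q, hq, hqi⟩, k⟩ := p
    ext1
    · ext1
      simp [erase_of_notMem_support (notMem_support_iff.2 hqi)]
    · classical simp [update_apply]

def signedChooseProd (d : α → ℕ) (ℓ : α →₀ ℕ) : ℤ :=
  (-1) ^ (ℓ.sum fun _ x => x) * ℓ.prod fun t x => ((d t).choose x : ℤ)

theorem signedChooseProd_eq_mul_erase (d : α → ℕ) (ℓ : α →₀ ℕ) (i : α) :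
    signedChooseProd d ℓ =
      signedChooseProd d (ℓ.erase i) * ((-1) ^ ℓ i * (d i).choose (ℓ i)) := by
  rw [signedChooseProd, signedChooseProd, ← add_sum_erase' ℓ i _ fun _ => rfl,
    ← mul_prod_erase' ℓ i _ fun _ => by simp, pow_add]
  ring

theorem finsum_signedChooseProd_eq_zero {P : (α →₀ ℕ) → Prop} (d : α → ℕ) (i : α)
    (hd : d i ≠ 0) (hP : ∀ ℓ, P ℓ ↔ P (ℓ.erase i)) :
    ∑ᶠ ℓ : {ℓ // P ℓ}, signedChooseProd d ℓ = 0 := by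
  calc ∑ᶠ ℓ : {ℓ // P ℓ}, signedChooseProd d ℓ
      = ∑ᶠ p : {q // P q ∧ q i = 0} × ℕ,
          signedChooseProd d p.1 * ((-1) ^ p.2 * (d i).choose p.2) := by
        rw [← finsum_comp_equiv (subtypeEquivEraseProd i hP)]
        exact finsum_congr fun ℓ => signedChooseProd_eq_mul_erase d ℓ i
    _ = (∑ᶠ q : {q // P q ∧ q i = 0}, signedChooseProd d q) *
          ∑ᶠ k : ℕ, ((-1) ^ k * (d i).choose k : ℤ) := by rw [finsum_mul_finsum]
    _ = 0 := by rw [Int.finsum_alternating_choose_of_ne hd, mul_zero]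

end Finsupp

theorem weight_condition_iff_erase {c : ℕ} (hc : c ≠ 0) (h : ℤ) (ℓ : ℕ →₀ ℕ) :
    (ℓ 0 = 0 ∧ (∑ t ∈ ℓ.support, (t : ℤ) * ℓ t) = c * (∑ t ∈ ℓ.support, (ℓ t : ℤ)) + h) ↔
      (ℓ.erase c 0 = 0 ∧ (∑ t ∈ (ℓ.erase c).support, (t : ℤ) * ℓ.erase c t) =
        c * (∑ t ∈ (ℓ.erase c).support, (ℓ.erase c t : ℤ)) + h) := by
  have hweight := (ℓ.add_sum_erase' c (fun t x => (t : ℤ) * x) fun _ => by simp).symm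
  have hcount := (ℓ.add_sum_erase' c (fun _ x => (x : ℤ)) fun _ => rfl).symm
  simp only [Finsupp.sum] at hweight hcount
  rw [hweight, hcount, Finsupp.erase_ne (Ne.symm hc)]
  constructor <;> rintro ⟨h0, hsum⟩ <;> exact ⟨h0, by linarith⟩

/-- the Euler characteristic of the weight-(0,h) chain complex of the
pre Lie superalgebra of polynomial multivector fields on ℝⁿ vanishes for every h.
With d_t = dim X¹_{t-1}(ℝⁿ) = n·C(n+t-2, n-1), the chain space of degree m = Σ ℓ_t
is ⨁ Λ^{ℓ₁}X¹₀ △ Λ^{ℓ₂}X¹₁ △ ⋯ over sequences with Σ_t t·ℓ_t = 2m + h, so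
Σ_m (-1)^m dim C_m^{(0,h)}
  = Σ_{ℓ : Σ t ℓ_t = 2 Σ ℓ_t + h} (-1)^{Σ ℓ_t} Π_t C(d_t, ℓ_t) = 0
(the empty sequence accounts for the m = 0 chain when h = 0). -/
theorem euler_characteristic_weight_zero (n : ℕ) (hn : 1 ≤ n) (h : ℤ) :
    ∑ᶠ ℓ : {ℓ : ℕ →₀ ℕ // ℓ 0 = 0 ∧
        (∑ t ∈ ℓ.support, (t : ℤ) * ℓ t) = 2 * (∑ t ∈ ℓ.support, (ℓ t : ℤ)) + h},
      ((-1 : ℤ) ^ (∑ t ∈ ℓ.1.support, ℓ.1 t)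
        * ∏ t ∈ ℓ.1.support,
            (Nat.choose (n * Nat.choose (n + t - 2) (n - 1)) (ℓ.1 t) : ℤ)) = 0 := by
  have hd : n * Nat.choose (n + 2 - 2) (n - 1) ≠ 0 := by
    rw [Nat.add_sub_cancel]
    exact Nat.mul_ne_zero (by omega) (Nat.choose_pos (Nat.sub_le n 1)).ne'
  exact Finsupp.finsum_signedChooseProd_eq_zero (fun t => n * Nat.choose (n + t - 2) (n - 1)) 2
    hd (weight_condition_iff_erase two_ne_zero h)
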